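/- arXiv:0711.3964 — 3 statements merged into one kernel-verified Lean document; each statement's English description precedes it below -/
import Mathlib

section
/- A point r* is a critical point of ψ (i.e., grad ψ(r*) = 0) with all trust values T_{ij}(r*) = c₀ − d_i(r*) positive if and only if r* is a fixed point of the reputation iteration: for every item j, r*_j = Σ_{i: i→j} T_{ij}(r*) E_{ij} / Σ_{i: i→j} T_{ij}(r*). -/
theorem Finset.sum_mul_sub_eq_zero_iff_eq_div {ι K : Type*} [Field K] (s : Finset ι)
    (w e : ι → K) (x : K) (hw : ∑ i ∈ s, w i ≠ 0) :
    ∑ i ∈ s, w i * (e i - x) = 0 ↔ x = (∑ i ∈ s, w i * e i) / ∑ i ∈ s, w i := by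
  simp only [mul_sub, Finset.sum_sub_distrib, ← Finset.sum_mul, sub_eq_zero, eq_div_iff hw]
  rw [eq_comm, mul_comm]

theorem critical_iff_fixed_general
    (n m : ℕ) (A : Fin n → Fin m → Bool) (E : Fin n → Fin m → ℝ) (c₀ : ℝ)
    (hn : ∀ j : Fin m, 1 ≤ (Finset.univ.filter (fun i => A i j = true)).card)
    (d : (Fin m → ℝ) → Fin n → ℝ)
    (r : Fin m → ℝ)
    (hTpos : ∀ i j, A i j = true → 0 < c₀ - d r i) :
    (∀ j, (4 : ℝ) * ∑ i ∈ Finset.univ.filter (fun i => A i j = true),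
        (c₀ - d r i) * (E i j - r j) = 0) ↔
    (∀ j, r j =
      (∑ i ∈ Finset.univ.filter (fun i => A i j = true), (c₀ - d r i) * E i j) /
      (∑ i ∈ Finset.univ.filter (fun i => A i j = true), (c₀ - d r i))) := by
  refine forall_congr' fun j => ?_
  have htrust_pos : 0 < ∑ i ∈ Finset.univ.filter (fun i => A i j = true), (c₀ - d r i) :=
    Finset.sum_pos (fun i hi => hTpos i j (Finset.mem_filter.mp hi).2)
      (Finset.card_pos.mp (hn j))
  rw [mul_eq_zero, or_iff_right four_ne_zero]
  exact Finset.sum_mul_sub_eq_zero_iff_eq_div _ _ _ _ htrust_pos.ne'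

theorem critical_iff_fixed
    (n m : ℕ) (A : Fin n → Fin m → Bool) (E : Fin n → Fin m → ℝ) (c₀ : ℝ)
    (hc : 1 < c₀)
    (hE : ∀ i j, E i j ∈ Set.Icc (0:ℝ) 1)
    (hm : ∀ i : Fin n, 1 ≤ (Finset.univ.filter (fun j => A i j = true)).card)
    (hn : ∀ j : Fin m, 1 ≤ (Finset.univ.filter (fun i => A i j = true)).card)
    (d : (Fin m → ℝ) → Fin n → ℝ)
    (hd : ∀ r i, d r i = (1 / ((Finset.univ.filter (fun j => A i j = true)).card : ℝ)) *
      ∑ j ∈ Finset.univ.filter (fun j => A i j = true), (E i j - r j) ^ 2)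
    (r : Fin m → ℝ) (hr : ∀ j, r j ∈ Set.Icc (0:ℝ) 1)
    (hTpos : ∀ i j, A i j = true → 0 < c₀ - d r i) :
    (∀ j, (4 : ℝ) * ∑ i ∈ Finset.univ.filter (fun i => A i j = true),
        (c₀ - d r i) * (E i j - r j) = 0) ↔
    (∀ j, r j =
      (∑ i ∈ Finset.univ.filter (fun i => A i j = true), (c₀ - d r i) * E i j) /
      (∑ i ∈ Finset.univ.filter (fun i => A i j = true), (c₀ - d r i))) :=
  critical_iff_fixed_general n m A E c₀ hn d r hTpos
end

section
/- The reputation map F : [0,1]^m → [0,1]^m defined by F(r)_j = Σ_{i: i→j}(c₀ − d_i(r)) E_{ij} / Σ_{i: i→j}(c₀ − d_i(r)) (for c₀ > 1) is continuous, and hence has at least one fixed point in [0,1]^m. -/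
/-!
`F` is a weighted average of the ratings with weights `c₀ - dᵢ(r)`, which are continuous in `r`
and positive on the box, so `F` is continuous and maps the box into itself.

Instead of Brouwer's theorem, the fixed point comes from a potential. With `Sᵢ = mᵢ dᵢ` the
squared error of rater `i`, put `H(r) = ∑ᵢ (c₀ Sᵢ - Sᵢ² / (2 mᵢ))`. Each summand is a concave
function of `Sᵢ` with slope `c₀ - dᵢ`, the weight of rater `i`; bounding `H(F r) - H(r)` by
these tangent lines gives `H(F r) + ∑ⱼ Wⱼ (F(r)ⱼ - rⱼ)² ≤ H(r)`, where `Wⱼ > 0` is the total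
weight on item `j`. Hence a minimiser of `H` on the compact box is a fixed point of `F`.
-/

open Finset

theorem concave_quadratic_le_tangent (c m s t : ℝ) (hm : 0 ≤ m) :
    c * t - t ^ 2 / (2 * m) ≤ c * s - s ^ 2 / (2 * m) + (c - 1 / m * s) * (t - s) := by
  have hgap : c * s - s ^ 2 / (2 * m) + (c - 1 / m * s) * (t - s) - (c * t - t ^ 2 / (2 * m))
      = (t - s) ^ 2 / (2 * m) := by ring
  have : 0 ≤ (t - s) ^ 2 / (2 * m) := by positivity
  linarith

theorem sum_mul_sq_sub_weightedMean_sub_sq {ι : Type*} (s : Finset ι) (w e : ι → ℝ) (y : ℝ)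
    (hw : ∑ i ∈ s, w i ≠ 0) :
    ∑ i ∈ s, w i * ((e i - (∑ i ∈ s, w i * e i) / ∑ i ∈ s, w i) ^ 2 - (e i - y) ^ 2) =
      -(∑ i ∈ s, w i) * ((∑ i ∈ s, w i * e i) / ∑ i ∈ s, w i - y) ^ 2 := by
  set x := (∑ i ∈ s, w i * e i) / ∑ i ∈ s, w i
  have hx : ∑ i ∈ s, w i * e i = x * ∑ i ∈ s, w i := (div_mul_cancel₀ _ hw).symm
  calc ∑ i ∈ s, w i * ((e i - x) ^ 2 - (e i - y) ^ 2)
      = (x - y) * ((x + y) * ∑ i ∈ s, w i - 2 * ∑ i ∈ s, w i * e i) := by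
        rw [mul_sum, mul_sum, ← sum_sub_distrib, mul_sum]
        exact sum_congr rfl fun i _ => by ring
    _ = _ := by rw [hx]; ring

namespace Reputation

variable {ι κ : Type*} [Fintype κ] (A : ι → κ → Bool) (E : ι → κ → ℝ) (c₀ : ℝ)

def items (i : ι) : Finset κ := univ.filter (fun j => A i j = true)

noncomputable def sqErr (r : κ → ℝ) (i : ι) : ℝ := ∑ j ∈ items A i, (E i j - r j) ^ 2

noncomputable def disagreement (r : κ → ℝ) (i : ι) : ℝ :=
  (1 / (#(items A i) : ℝ)) * sqErr A E r i

noncomputable def weight (r : κ → ℝ) (i : ι) : ℝ := c₀ - disagreement A E r i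

section

variable {A E c₀}

theorem continuous_sqErr (i : ι) : Continuous fun r => sqErr A E r i :=
  continuous_finsetSum _ fun j _ => (continuous_const.sub (continuous_apply j)).pow 2

theorem continuous_weight (i : ι) : Continuous fun r => weight A E c₀ r i :=
  continuous_const.sub (continuous_const.mul (continuous_sqErr i))

theorem sqErr_le_card (hE : ∀ i j, E i j ∈ Set.Icc (0 : ℝ) 1) {r : κ → ℝ}
    (hr : r ∈ Set.Icc 0 1) (i : ι) : sqErr A E r i ≤ #(items A i) := by
  rw [← nsmul_one, ← sum_const]
  refine sum_le_sum fun j _ => ?_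
  have hr₀ : 0 ≤ r j := hr.1 j
  have hr₁ : r j ≤ 1 := hr.2 j
  obtain ⟨hE₀, hE₁⟩ := hE i j
  nlinarith

theorem weight_pos (hc : 1 < c₀) (hE : ∀ i j, E i j ∈ Set.Icc (0 : ℝ) 1) {r : κ → ℝ}
    (hr : r ∈ Set.Icc 0 1) (i : ι) : 0 < weight A E c₀ r i := by
  have : disagreement A E r i ≤ 1 := by
    rw [disagreement, one_div_mul_eq_div]
    exact div_le_one_of_le₀ (sqErr_le_card hE hr i) (Nat.cast_nonneg _)
  rw [weight]
  linarith

end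

variable [Fintype ι]

def raters (j : κ) : Finset ι := univ.filter (fun i => A i j = true)

noncomputable def reputationMap (r : κ → ℝ) (j : κ) : ℝ :=
  (∑ i ∈ raters A j, weight A E c₀ r i * E i j) / ∑ i ∈ raters A j, weight A E c₀ r i

noncomputable def potential (r : κ → ℝ) : ℝ :=
  ∑ i, (c₀ * sqErr A E r i - sqErr A E r i ^ 2 / (2 * #(items A i)))

theorem sum_items_eq_sum_raters (f : ι → κ → ℝ) :
    ∑ i, ∑ j ∈ items A i, f i j = ∑ j, ∑ i ∈ raters A j, f i j :=
  sum_comm' fun _ _ => by simp [items, raters]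

variable {A E c₀}

theorem continuous_potential : Continuous (potential A E c₀) :=
  continuous_finsetSum _ fun i _ =>
    (continuous_const.mul (continuous_sqErr i)).sub (((continuous_sqErr i).pow 2).div_const _)

theorem sum_weight_pos (hc : 1 < c₀) (hE : ∀ i j, E i j ∈ Set.Icc (0 : ℝ) 1) {r : κ → ℝ}
    (hr : r ∈ Set.Icc 0 1) {j : κ} (hj : (raters A j).Nonempty) :
    0 < ∑ i ∈ raters A j, weight A E c₀ r i :=
  sum_pos (fun i _ => weight_pos hc hE hr i) hj

theorem continuousOn_reputationMap (hc : 1 < c₀) (hE : ∀ i j, E i j ∈ Set.Icc (0 : ℝ) 1)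
    (hA : ∀ j, (raters A j).Nonempty) :
    ContinuousOn (reputationMap A E c₀) (Set.Icc 0 1) :=
  continuousOn_pi.2 fun j =>
    (continuous_finsetSum _ fun i _ => (continuous_weight i).mul continuous_const).continuousOn.div
      (continuous_finsetSum _ fun i _ => continuous_weight i).continuousOn
      fun _ hr => (sum_weight_pos hc hE hr (hA j)).ne'

theorem reputationMap_mem_Icc (hc : 1 < c₀) (hE : ∀ i j, E i j ∈ Set.Icc (0 : ℝ) 1)
    {r : κ → ℝ} (hr : r ∈ Set.Icc 0 1) : reputationMap A E c₀ r ∈ Set.Icc 0 1 := by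
  have hw : ∀ i, 0 ≤ weight A E c₀ r i := fun i => (weight_pos hc hE hr i).le
  refine ⟨fun j => div_nonneg ?_ ?_, fun j => div_le_one_of_le₀ ?_ ?_⟩
  · exact sum_nonneg fun i _ => mul_nonneg (hw i) (hE i j).1
  · exact sum_nonneg fun i _ => hw i
  · exact sum_le_sum fun i _ => mul_le_of_le_one_right (hw i) (hE i j).2
  · exact sum_nonneg fun i _ => hw i

theorem potential_le (r r' : κ → ℝ) :
    potential A E c₀ r' ≤ potential A E c₀ r +
      ∑ j, ∑ i ∈ raters A j, weight A E c₀ r i * ((E i j - r' j) ^ 2 - (E i j - r j) ^ 2) :=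
  calc potential A E c₀ r'
      ≤ ∑ i, (c₀ * sqErr A E r i - sqErr A E r i ^ 2 / (2 * #(items A i)) +
          weight A E c₀ r i * (sqErr A E r' i - sqErr A E r i)) :=
        sum_le_sum fun i _ => concave_quadratic_le_tangent _ _ _ _ (Nat.cast_nonneg _)
    _ = potential A E c₀ r + ∑ i, ∑ j ∈ items A i,
          weight A E c₀ r i * ((E i j - r' j) ^ 2 - (E i j - r j) ^ 2) := by
        simp only [sqErr, ← sum_sub_distrib, ← mul_sum, sum_add_distrib, potential]
    _ = _ := by rw [sum_items_eq_sum_raters]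

theorem potential_reputationMap_add_le (hc : 1 < c₀) (hE : ∀ i j, E i j ∈ Set.Icc (0 : ℝ) 1)
    (hA : ∀ j, (raters A j).Nonempty) {r : κ → ℝ} (hr : r ∈ Set.Icc 0 1) :
    potential A E c₀ (reputationMap A E c₀ r) +
        ∑ j, (∑ i ∈ raters A j, weight A E c₀ r i) * (reputationMap A E c₀ r j - r j) ^ 2 ≤
      potential A E c₀ r := by
  have hstep := potential_le (A := A) (E := E) (c₀ := c₀) r (reputationMap A E c₀ r)
  simp only [reputationMap, sum_mul_sq_sub_weightedMean_sub_sq _ _ _ _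
    (sum_weight_pos hc hE hr (hA _)).ne', neg_mul, sum_neg_distrib] at hstep ⊢
  linarith

theorem exists_fixedPoint (hc : 1 < c₀) (hE : ∀ i j, E i j ∈ Set.Icc (0 : ℝ) 1)
    (hA : ∀ j, (raters A j).Nonempty) :
    ∃ r ∈ Set.Icc (0 : κ → ℝ) 1, reputationMap A E c₀ r = r := by
  obtain ⟨r, hr, hmin⟩ := isCompact_Icc.exists_isMinOn (Set.nonempty_Icc.2 zero_le_one)
    (continuous_potential (A := A) (E := E) (c₀ := c₀)).continuousOn
  have hdescent := potential_reputationMap_add_le hc hE hA hr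
  have hminimal : potential A E c₀ r ≤ potential A E c₀ (reputationMap A E c₀ r) :=
    hmin (reputationMap_mem_Icc hc hE hr)
  have hterm_nonneg : ∀ j ∈ univ,
      0 ≤ (∑ i ∈ raters A j, weight A E c₀ r i) * (reputationMap A E c₀ r j - r j) ^ 2 :=
    fun j _ => mul_nonneg (sum_weight_pos hc hE hr (hA j)).le (sq_nonneg _)
  have hsum_zero := le_antisymm (by linarith) (sum_nonneg hterm_nonneg)
  refine ⟨r, hr, funext fun j => ?_⟩
  have hterm_zero := (sum_eq_zero_iff_of_nonneg hterm_nonneg).1 hsum_zero j (mem_univ j)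
  simpa [sub_eq_zero, (sum_weight_pos hc hE hr (hA j)).ne'] using hterm_zero

end Reputation

theorem reputation_map_continuous_and_fixed_point_general
    (n m : ℕ) (A : Fin n → Fin m → Bool) (E : Fin n → Fin m → ℝ) (c₀ : ℝ)
    (hc : 1 < c₀)
    (hE : ∀ i j, E i j ∈ Set.Icc (0:ℝ) 1)
    (hn : ∀ j : Fin m, 1 ≤ (Finset.univ.filter (fun i => A i j = true)).card)
    (d : (Fin m → ℝ) → Fin n → ℝ)
    (hd : ∀ r i, d r i = (1 / ((Finset.univ.filter (fun j => A i j = true)).card : ℝ)) *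
      ∑ j ∈ Finset.univ.filter (fun j => A i j = true), (E i j - r j) ^ 2)
    (F : (Fin m → ℝ) → (Fin m → ℝ))
    (hF : ∀ r j, F r j =
      (∑ i ∈ Finset.univ.filter (fun i => A i j = true), (c₀ - d r i) * E i j) /
      (∑ i ∈ Finset.univ.filter (fun i => A i j = true), (c₀ - d r i))) :
    ContinuousOn F (Set.Icc 0 1) ∧
    ∃ r ∈ Set.Icc (0 : Fin m → ℝ) 1, F r = r := by
  obtain rfl : d = Reputation.disagreement A E := funext₂ hd
  obtain rfl : F = Reputation.reputationMap A E c₀ := funext₂ hF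
  have hA : ∀ j, (Reputation.raters A j).Nonempty := fun j => card_pos.1 (hn j)
  exact ⟨Reputation.continuousOn_reputationMap hc hE hA, Reputation.exists_fixedPoint hc hE hA⟩

theorem reputation_map_continuous_and_fixed_point
    (n m : ℕ) (A : Fin n → Fin m → Bool) (E : Fin n → Fin m → ℝ) (c₀ : ℝ)
    (hc : 1 < c₀)
    (hE : ∀ i j, E i j ∈ Set.Icc (0:ℝ) 1)
    (hm : ∀ i : Fin n, 1 ≤ (Finset.univ.filter (fun j => A i j = true)).card)
    (hn : ∀ j : Fin m, 1 ≤ (Finset.univ.filter (fun i => A i j = true)).card)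
    (d : (Fin m → ℝ) → Fin n → ℝ)
    (hd : ∀ r i, d r i = (1 / ((Finset.univ.filter (fun j => A i j = true)).card : ℝ)) *
      ∑ j ∈ Finset.univ.filter (fun j => A i j = true), (E i j - r j) ^ 2)
    (F : (Fin m → ℝ) → (Fin m → ℝ))
    (hF : ∀ r j, F r j =
      (∑ i ∈ Finset.univ.filter (fun i => A i j = true), (c₀ - d r i) * E i j) /
      (∑ i ∈ Finset.univ.filter (fun i => A i j = true), (c₀ - d r i))) :
    ContinuousOn F (Set.Icc 0 1) ∧
    ∃ r ∈ Set.Icc (0 : Fin m → ℝ) 1, F r = r :=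
  reputation_map_continuous_and_fixed_point_general n m A E c₀ hc hE hn d hd F hF
end

section
/- For the single-item case (m = 1, all n raters evaluate the one item), the fixed-point equation r = Σ_i (c₀ − (E_i − r)²) E_i / Σ_i (c₀ − (E_i − r)²) has a unique solution in [0,1] whenever c₀ > 1 is sufficiently large (e.g., c₀ > 1 + 2n suffices), and this solution depends continuously on c₀. -/
/-!
The residual `∑ i, (c - (E i - r) ^ 2) * (E i - r)` has `r`-derivative `∑ i, (3 (E i - r) ^ 2 - c)`,
which is negative on `[0, 1]` once `c > 3` because `(E i - r) ^ 2 ≤ 1` there. It is nonnegative at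
`r = 0` and nonpositive at `r = 1`, so it has exactly one root in `[0, 1]`. Continuity of the root in
`c` holds for any continuous family of strictly decreasing functions: if `x < ρ c₀` then the residual
at `x` is positive for `c₀`, hence for all nearby `c`, which forces `x < ρ c`.
-/

open Filter Set Topology

theorem existsUnique_mem_Icc_eq_zero_of_strictAntiOn {f : ℝ → ℝ} {a b : ℝ} (hab : a ≤ b)
    (hf : ContinuousOn f (Icc a b)) (hanti : StrictAntiOn f (Icc a b))
    (hb : f b ≤ 0) (ha : 0 ≤ f a) :
    ∃! r, r ∈ Icc a b ∧ f r = 0 := by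
  obtain ⟨r, hr, hfr⟩ := intermediate_value_Icc' hab hf ⟨hb, ha⟩
  exact ⟨r, ⟨hr, hfr⟩, fun s ⟨hs, hfs⟩ => hanti.injOn hs hr (hfs.trans hfr.symm)⟩

section RootContinuity

variable {X α β : Type*} [TopologicalSpace X] [LinearOrder α]
  [LinearOrder β] [TopologicalSpace β] [OrderTopology β]
  {F : X → α → β} {ρ : X → α} {a b : α} {y : β} {c₀ : X}

theorem eventually_lt_root_of_strictAntiOn (hF : ∀ x ∈ Icc a b, ContinuousAt (F · x) c₀)
    (hanti : ∀ᶠ c in 𝓝 c₀, StrictAntiOn (F c) (Icc a b))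
    (hρ : ∀ᶠ c in 𝓝 c₀, ρ c ∈ Icc a b ∧ F c (ρ c) = y) {x : α} (hx : x < ρ c₀) :
    ∀ᶠ c in 𝓝 c₀, x < ρ c := by
  obtain ⟨hρ₀, hroot₀⟩ := hρ.self_of_nhds
  rcases lt_or_ge x a with hxa | hax
  · filter_upwards [hρ] with c hc using hxa.trans_le hc.1.1
  have hxI : x ∈ Icc a b := ⟨hax, hx.le.trans hρ₀.2⟩
  have hy : y < F c₀ x := hroot₀ ▸ hanti.self_of_nhds hxI hρ₀ hx
  filter_upwards [(hF x hxI).eventually (lt_mem_nhds hy), hanti, hρ] with c hyc hc ⟨hρc, hroot⟩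
  exact (StrictAntiOn.lt_iff_gt hc hρc hxI).1 (hroot ▸ hyc)

theorem continuousAt_of_strictAntiOn_of_eq [TopologicalSpace α] [OrderTopology α]
    (hF : ∀ x ∈ Icc a b, ContinuousAt (F · x) c₀)
    (hanti : ∀ᶠ c in 𝓝 c₀, StrictAntiOn (F c) (Icc a b))
    (hρ : ∀ᶠ c in 𝓝 c₀, ρ c ∈ Icc a b ∧ F c (ρ c) = y) :
    ContinuousAt ρ c₀ := by
  refine tendsto_order.2 ⟨fun x hx => eventually_lt_root_of_strictAntiOn hF hanti hρ hx,
    fun x hx => ?_⟩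
  -- the other half is the first one for the order duals of `α` and `β`
  exact eventually_lt_root_of_strictAntiOn (α := αᵒᵈ) (β := βᵒᵈ) (a := OrderDual.toDual b)
    (b := OrderDual.toDual a) (fun x hx => hF x hx.symm)
    (hanti.mono fun c h x hx z hz hxz => h hz.symm hx.symm hxz)
    (hρ.mono fun c h => ⟨h.1.symm, h.2⟩) hx

end RootContinuity

noncomputable def weightedResidual {ι : Type*} [Fintype ι] (E : ι → ℝ) (c r : ℝ) : ℝ :=
  ∑ i, (c - (E i - r) ^ 2) * (E i - r)

section WeightedResidual

variable {ι : Type*} [Fintype ι] (E : ι → ℝ)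

theorem hasDerivAt_weightedResidual (c r : ℝ) :
    HasDerivAt (weightedResidual E c) (∑ i, (3 * (E i - r) ^ 2 - c)) r := by
  refine HasDerivAt.fun_sum fun i _ => ?_
  have hlin : HasDerivAt (fun r : ℝ => E i - r) (-1) r := (hasDerivAt_id r).const_sub (E i)
  exact (((hlin.fun_pow 2).const_sub c).mul hlin).congr_deriv (by ring)

theorem continuous_weightedResidual (c : ℝ) : Continuous (weightedResidual E c) :=
  continuous_iff_continuousAt.2 fun r => (hasDerivAt_weightedResidual E c r).continuousAt

theorem continuous_weightedResidual_left (r : ℝ) : Continuous (weightedResidual E · r) := by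
  unfold weightedResidual
  fun_prop

variable {E} (hE : ∀ i, E i ∈ Icc (0 : ℝ) 1)
include hE

theorem strictAntiOn_weightedResidual [Nonempty ι] {c : ℝ} (hc : 3 < c) :
    StrictAntiOn (weightedResidual E c) (Icc 0 1) := by
  refine strictAntiOn_of_deriv_neg (convex_Icc 0 1) (continuous_weightedResidual E c).continuousOn
    fun r hr => ?_
  rw [interior_Icc] at hr
  rw [(hasDerivAt_weightedResidual E c r).deriv]
  refine Finset.sum_neg (fun i _ => ?_) Finset.univ_nonempty
  nlinarith [(hE i).1, (hE i).2, hr.1, hr.2]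

theorem weightedResidual_zero_nonneg {c : ℝ} (hc : 1 ≤ c) : 0 ≤ weightedResidual E c 0 :=
  Finset.sum_nonneg fun i _ => by nlinarith [(hE i).1, (hE i).2]

theorem weightedResidual_one_nonpos {c : ℝ} (hc : 1 ≤ c) : weightedResidual E c 1 ≤ 0 :=
  Finset.sum_nonpos fun i _ => by nlinarith [(hE i).1, (hE i).2]

end WeightedResidual

theorem single_item_unique_root
    (n : ℕ) (hn : 0 < n) (E : Fin n → ℝ) (hE : ∀ i, E i ∈ Set.Icc (0:ℝ) 1)
    (g : ℝ → ℝ → ℝ)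
    (hg : ∀ c₀ r, g c₀ r = ∑ i : Fin n, (c₀ - (E i - r) ^ 2) * (E i - r)) :
    (∀ c₀ : ℝ, 3 < c₀ → ∃! r, r ∈ Set.Icc (0:ℝ) 1 ∧ g c₀ r = 0) ∧
    (∀ ρ : ℝ → ℝ, (∀ c₀ : ℝ, 3 < c₀ → ρ c₀ ∈ Set.Icc (0:ℝ) 1 ∧ g c₀ (ρ c₀) = 0) →
      ContinuousOn ρ (Set.Ioi (3:ℝ))) := by
  obtain rfl : g = weightedResidual E := funext fun c => funext fun r => hg c r
  have : Nonempty (Fin n) := Fin.pos_iff_nonempty.mp hn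
  refine ⟨fun c hc => ?_, fun ρ hρ => continuousOn_of_forall_continuousAt fun c₀ hc₀ => ?_⟩
  · exact existsUnique_mem_Icc_eq_zero_of_strictAntiOn zero_le_one
      (continuous_weightedResidual E c).continuousOn (strictAntiOn_weightedResidual hE hc)
      (weightedResidual_one_nonpos hE (by linarith)) (weightedResidual_zero_nonneg hE (by linarith))
  · exact continuousAt_of_strictAntiOn_of_eq
      (fun r _ => (continuous_weightedResidual_left E r).continuousAt)
      (eventually_gt_nhds hc₀ |>.mono fun c hc => strictAntiOn_weightedResidual hE hc)
      (eventually_gt_nhds hc₀ |>.mono hρ)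
end
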